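/- arXiv:1401.7640 — 6 statements merged into one kernel-verified Lean document; each statement's English description precedes it below -/
import Mathlib

section
/- Beurling's extremality criterion: let Γ be a family of walks in a finite graph G and ρ ∈ A(Γ). Suppose there exists Γ̃ ⊆ Γ with ℓ_ρ(γ)=1 for all γ ∈ Γ̃, such that for every function h:E→ℝ satisfying ℓ_h(γ) ≥ 0 for all γ ∈ Γ̃, one has Σ_{e∈E} h(e)ρ(e) ≥ 0. Then ρ is extremal, i.e., E(ρ) = Mod(Γ). -/
open scoped ENNReal

variable {V : Type*} [DecidableEq V] {G : SimpleGraph V} [Fintype G.edgeSet]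

/-- A walk in `G` with arbitrary endpoints. -/
abbrev GWalk (G : SimpleGraph V) : Type _ := Σ u : V, Σ v : V, G.Walk u v

/-- The `ρ`-length of a walk: sum of `ρ` over traversed edges with multiplicity. -/
def wlen (ρ : G.edgeSet → ℝ) (γ : GWalk G) : ℝ :=
  ∑ e : G.edgeSet, (γ.2.2.edges.count (e : Sym2 V) : ℝ) * ρ e

/-- Admissible densities for a family of walks. -/
def Adm (Γ : Set (GWalk G)) : Set (G.edgeSet → ℝ) :=
  {ρ | (∀ e, 0 ≤ ρ e) ∧ ∀ γ ∈ Γ, 1 ≤ wlen ρ γ}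

/-- The energy of a density. -/
def energy (G : SimpleGraph V) [Fintype G.edgeSet] (ρ : G.edgeSet → ℝ) : ℝ :=
  ∑ e, ρ e ^ 2

/-- The modulus of a family of walks. -/
noncomputable def GMod (Γ : Set (GWalk G)) : ℝ≥0∞ :=
  sInf ((fun ρ => ENNReal.ofReal (energy G ρ)) '' Adm Γ)

theorem beurling_criterion (Γ : Set (GWalk G)) (ρ : G.edgeSet → ℝ) (hρ : ρ ∈ Adm Γ)
    (Γt : Set (GWalk G)) (hsub : Γt ⊆ Γ) (hone : ∀ γ ∈ Γt, wlen ρ γ = 1)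
    (hcrit : ∀ h : G.edgeSet → ℝ, (∀ γ ∈ Γt, 0 ≤ wlen h γ) → 0 ≤ ∑ e, h e * ρ e) :
    ENNReal.ofReal (energy G ρ) = GMod Γ := by
  have key : ∀ σ ∈ Adm Γ, energy G ρ ≤ energy G σ := by
    intro σ hσ
    have hh : ∀ γ ∈ Γt, 0 ≤ wlen (fun e => σ e - ρ e) γ := by
      intro γ hγ
      have h1 : wlen (fun e => σ e - ρ e) γ = wlen σ γ - wlen ρ γ := by
        simp [wlen, mul_sub, Finset.sum_sub_distrib]
      rw [h1, hone γ hγ]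
      linarith [hσ.2 γ (hsub hγ)]
    have h2 := hcrit _ hh
    have h3 : ∑ e, ρ e ^ 2 ≤ ∑ e, σ e * ρ e := by
      have : ∑ e, (σ e - ρ e) * ρ e = ∑ e, σ e * ρ e - ∑ e, ρ e ^ 2 := by
        rw [← Finset.sum_sub_distrib]; congr 1; ext e; ring
      rw [this] at h2; linarith
    have hcs : (∑ e, σ e * ρ e) ^ 2 ≤ (∑ e, σ e ^ 2) * ∑ e, ρ e ^ 2 :=
      Finset.sum_mul_sq_le_sq_mul_sq Finset.univ σ ρ
    have hρnn : (0:ℝ) ≤ ∑ e, ρ e ^ 2 := Finset.sum_nonneg fun e _ => sq_nonneg _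
    rcases eq_or_lt_of_le hρnn with h0 | h0
    · simpa [energy, ← h0] using Finset.sum_nonneg fun (e : G.edgeSet) _ => sq_nonneg (σ e)
    · have hsq : (∑ e, ρ e ^ 2) ^ 2 ≤ (∑ e, σ e ^ 2) * ∑ e, ρ e ^ 2 := by
        calc (∑ e, ρ e ^ 2) ^ 2 ≤ (∑ e, σ e * ρ e) ^ 2 := by
              apply pow_le_pow_left₀ hρnn h3 2
          _ ≤ (∑ e, σ e ^ 2) * ∑ e, ρ e ^ 2 := hcs
      have : (∑ e, ρ e ^ 2) ≤ ∑ e, σ e ^ 2 := by nlinarith [hsq]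
      simpa [energy] using this
  apply le_antisymm
  · apply le_sInf
    rintro x ⟨σ, hσ, rfl⟩
    exact ENNReal.ofReal_le_ofReal (key σ hσ)
  · exact sInf_le ⟨ρ, hρ, rfl⟩
end

section
/- Beurling subfamilies compute modulus: if Γ̃ ⊆ Γ is a Beurling subfamily for the extremal density ρ₀ of Γ, then Mod(Γ̃) = Mod(Γ). -/
/-!
For `ρ` admissible for `Γ̃`, the perturbation `h = ρ - ρ₀` has nonnegative length on every walk
of `Γ̃`, because `ρ₀` has length exactly one there; the Beurling condition then gives
`⟨h, ρ₀⟩ ≥ 0`, so `‖ρ‖² = ‖ρ₀‖² + 2⟨h, ρ₀⟩ + ‖h‖² ≥ ‖ρ₀‖² = Mod(Γ)`. Hence `Mod(Γ̃) ≥ Mod(Γ)`,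
and the reverse inequality is monotonicity of the modulus.
-/

open scoped ENNReal

variable {V : Type*} [DecidableEq V] {G : SimpleGraph V} [Fintype G.edgeSet]

theorem Finset.sum_sq_le_sum_sq_of_sum_sub_mul_nonneg {ι : Type*} (s : Finset ι) (f g : ι → ℝ)
    (h : 0 ≤ ∑ i ∈ s, (g i - f i) * f i) : ∑ i ∈ s, f i ^ 2 ≤ ∑ i ∈ s, g i ^ 2 := by
  have hsq : ∑ i ∈ s, g i ^ 2 = ∑ i ∈ s, f i ^ 2 + 2 * ∑ i ∈ s, (g i - f i) * f i
      + ∑ i ∈ s, (g i - f i) ^ 2 := by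
    rw [Finset.mul_sum, ← Finset.sum_add_distrib, ← Finset.sum_add_distrib]
    exact Finset.sum_congr rfl fun i _ => by ring
  have hnonneg : 0 ≤ ∑ i ∈ s, (g i - f i) ^ 2 := Finset.sum_nonneg fun i _ => sq_nonneg _
  linarith

theorem wlen_sub (ρ σ : G.edgeSet → ℝ) (γ : GWalk G) :
    wlen (ρ - σ) γ = wlen ρ γ - wlen σ γ := by
  simp only [wlen, Pi.sub_apply, mul_sub, Finset.sum_sub_distrib]

theorem Adm_anti {Γ Γ' : Set (GWalk G)} (h : Γ ⊆ Γ') : Adm Γ' ⊆ Adm Γ :=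
  fun _ hρ => ⟨hρ.1, fun γ hγ => hρ.2 γ (h hγ)⟩

theorem GMod_mono {Γ Γ' : Set (GWalk G)} (h : Γ ⊆ Γ') : GMod Γ ≤ GMod Γ' :=
  sInf_le_sInf (Set.image_mono (Adm_anti h))

theorem energy_le_of_mem_Adm {Γ : Set (GWalk G)} {ρ₀ ρ : G.edgeSet → ℝ}
    (hone : ∀ γ ∈ Γ, wlen ρ₀ γ = 1)
    (hcrit : ∀ h : G.edgeSet → ℝ, (∀ γ ∈ Γ, 0 ≤ wlen h γ) → 0 ≤ ∑ e, h e * ρ₀ e)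
    (hρ : ρ ∈ Adm Γ) : energy G ρ₀ ≤ energy G ρ := by
  refine Finset.sum_sq_le_sum_sq_of_sum_sub_mul_nonneg _ _ _ (hcrit (ρ - ρ₀) fun γ hγ => ?_)
  rw [wlen_sub, hone γ hγ, sub_nonneg]
  exact hρ.2 γ hγ

theorem ofReal_energy_le_GMod {Γ : Set (GWalk G)} {ρ₀ : G.edgeSet → ℝ}
    (hone : ∀ γ ∈ Γ, wlen ρ₀ γ = 1)
    (hcrit : ∀ h : G.edgeSet → ℝ, (∀ γ ∈ Γ, 0 ≤ wlen h γ) → 0 ≤ ∑ e, h e * ρ₀ e) :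
    ENNReal.ofReal (energy G ρ₀) ≤ GMod Γ := by
  refine le_sInf ?_
  rintro _ ⟨ρ, hρ, rfl⟩
  exact ENNReal.ofReal_le_ofReal (energy_le_of_mem_Adm hone hcrit hρ)

theorem beurling_subfamily_modulus_general (Γ Γt : Set (GWalk G)) (ρ₀ : G.edgeSet → ℝ)
    (hext : ENNReal.ofReal (energy G ρ₀) = GMod Γ)
    (hsub : Γt ⊆ Γ) (hone : ∀ γ ∈ Γt, wlen ρ₀ γ = 1)
    (hcrit : ∀ h : G.edgeSet → ℝ, (∀ γ ∈ Γt, 0 ≤ wlen h γ) → 0 ≤ ∑ e, h e * ρ₀ e) :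
    GMod Γt = GMod Γ :=
  le_antisymm (GMod_mono hsub) (hext ▸ ofReal_energy_le_GMod hone hcrit)

theorem beurling_subfamily_modulus (Γ Γt : Set (GWalk G)) (ρ₀ : G.edgeSet → ℝ)
    (hρ₀ : ρ₀ ∈ Adm Γ) (hext : ENNReal.ofReal (energy G ρ₀) = GMod Γ)
    (hsub : Γt ⊆ Γ) (hone : ∀ γ ∈ Γt, wlen ρ₀ γ = 1)
    (hcrit : ∀ h : G.edgeSet → ℝ, (∀ γ ∈ Γt, 0 ≤ wlen h γ) → 0 ≤ ∑ e, h e * ρ₀ e) :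
    GMod Γt = GMod Γ :=
  beurling_subfamily_modulus_general Γ Γt ρ₀ hext hsub hone hcrit
end

section
/- Symmetry rule: let T:V→V be a graph automorphism of a finite graph G with T² = identity, and let Γ be a T-invariant family of walks (T(Γ)=Γ). Then Mod(Γ) = inf{ E(ρ) : ρ ∈ A(Γ), ρ = ρ∘T }, i.e., the infimum of the energy over admissible densities may be restricted to T-invariant ones. -/
open scoped ENNReal

variable {V : Type*} [DecidableEq V] {G : SimpleGraph V} [Fintype G.edgeSet]

/-
Averaging a density with its pullback under the involution `T` yields a `T`-invariant density.
Pulling back along an automorphism preserves energy and, because `T` maps `Γ` into itself,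
admissibility; since admissible densities form a convex set and the energy is convex, the
average is admissible with energy at most that of the original density.
-/

theorem sInf_image_eq_of_forall_exists_le {α β : Type*} [CompleteLattice β] {f : α → β}
    {s t : Set α} (hts : t ⊆ s) (h : ∀ x ∈ s, ∃ y ∈ t, f y ≤ f x) :
    sInf (f '' s) = sInf (f '' t) := by
  refine le_antisymm (sInf_le_sInf (Set.image_mono hts)) (le_sInf ?_)
  rintro _ ⟨x, hx, rfl⟩
  obtain ⟨y, hy, hyx⟩ := h x hx
  exact (sInf_le (Set.mem_image_of_mem f hy)).trans hyx

section

omit [DecidableEq V] [Fintype G.edgeSet]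

def GWalk.map {V' : Type*} {G' : SimpleGraph V'} (f : G →g G') (γ : GWalk G) : GWalk G' :=
  ⟨f γ.1, f γ.2.1, γ.2.2.map f⟩

noncomputable def symmetrize (T : G ≃g G) (ρ : G.edgeSet → ℝ) : G.edgeSet → ℝ :=
  (1 / 2 : ℝ) • ρ + (1 / 2 : ℝ) • (ρ ∘ T.mapEdgeSet)

lemma mapEdgeSet_involutive {T : G ≃g G} (hT : Function.Involutive T) :
    Function.Involutive T.mapEdgeSet := fun e => by
  ext : 1
  show Sym2.map T (Sym2.map T (e : Sym2 V)) = e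
  rw [Sym2.map_map, hT.comp_self, Sym2.map_id, id]

lemma symmetrize_mapEdgeSet {T : G ≃g G} (hT : Function.Involutive T) (ρ : G.edgeSet → ℝ)
    (e : G.edgeSet) : symmetrize T ρ (T.mapEdgeSet e) = symmetrize T ρ e := by
  simp only [symmetrize, Pi.add_apply, Pi.smul_apply, Function.comp_apply,
    mapEdgeSet_involutive hT e, add_comm]

end

section

omit [DecidableEq V]

lemma energy_comp_equiv (ρ : G.edgeSet → ℝ) (σ : G.edgeSet ≃ G.edgeSet) :
    energy G (ρ ∘ σ) = energy G ρ :=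
  σ.sum_comp fun e => ρ e ^ 2

lemma convexOn_energy : ConvexOn ℝ Set.univ (energy G) := by
  refine ⟨convex_univ, fun ρ _ σ _ a b ha hb hab => ?_⟩
  simp only [energy, smul_eq_mul, Finset.mul_sum, ← Finset.sum_add_distrib]
  exact Finset.sum_le_sum fun e _ =>
    (Even.convexOn_pow even_two).2 (Set.mem_univ (ρ e)) (Set.mem_univ (σ e)) ha hb hab

lemma energy_symmetrize_le (T : G ≃g G) (ρ : G.edgeSet → ℝ) :
    energy G (symmetrize T ρ) ≤ energy G ρ := by
  have := convexOn_energy.2 (Set.mem_univ ρ) (Set.mem_univ (ρ ∘ T.mapEdgeSet))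
    (by norm_num : (0 : ℝ) ≤ 1 / 2) (by norm_num : (0 : ℝ) ≤ 1 / 2) (by norm_num)
  rw [energy_comp_equiv] at this
  exact this.trans_eq (by simp only [smul_eq_mul]; ring)

end

lemma wlen_add (ρ σ : G.edgeSet → ℝ) (γ : GWalk G) : wlen (ρ + σ) γ = wlen ρ γ + wlen σ γ := by
  simp only [wlen, Pi.add_apply, mul_add, Finset.sum_add_distrib]

lemma wlen_smul (c : ℝ) (ρ : G.edgeSet → ℝ) (γ : GWalk G) : wlen (c • ρ) γ = c * wlen ρ γ := by
  simp only [wlen, Pi.smul_apply, smul_eq_mul, Finset.mul_sum]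
  exact Finset.sum_congr rfl fun _ _ => by ring

lemma wlen_map_iso {V' : Type*} [DecidableEq V'] {G' : SimpleGraph V'} [Fintype G'.edgeSet]
    (T : G ≃g G') (ρ : G'.edgeSet → ℝ) (γ : GWalk G) :
    wlen ρ (γ.map T.toHom) = wlen (ρ ∘ T.mapEdgeSet) γ := by
  have hcount : ∀ e : G.edgeSet, ((γ.map T.toHom).2.2.edges.count (T.mapEdgeSet e : Sym2 V'))
      = γ.2.2.edges.count (e : Sym2 V) := fun e => by
    simp only [GWalk.map, SimpleGraph.Walk.edges_map]
    exact List.count_map_of_injective _ _ (Sym2.map.injective T.injective) _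
  unfold wlen
  rw [← T.mapEdgeSet.sum_comp]
  simp only [hcount, Function.comp_apply]

lemma convex_adm (Γ : Set (GWalk G)) : Convex ℝ (Adm Γ) := by
  rintro ρ ⟨hρ₀, hρ⟩ σ ⟨hσ₀, hσ⟩ a b ha hb hab
  refine ⟨fun e => ?_, fun γ hγ => ?_⟩
  · simp only [Pi.add_apply, Pi.smul_apply, smul_eq_mul]
    exact add_nonneg (mul_nonneg ha (hρ₀ e)) (mul_nonneg hb (hσ₀ e))
  · rw [wlen_add, wlen_smul, wlen_smul]
    nlinarith [hρ γ hγ, hσ γ hγ]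

lemma comp_mapEdgeSet_mem_adm {T : G ≃g G} {Γ : Set (GWalk G)}
    (hΓ : ∀ γ ∈ Γ, γ.map T.toHom ∈ Γ) {ρ : G.edgeSet → ℝ} (hρ : ρ ∈ Adm Γ) :
    ρ ∘ T.mapEdgeSet ∈ Adm Γ :=
  ⟨fun _ => hρ.1 _, fun γ hγ => wlen_map_iso T ρ γ ▸ hρ.2 _ (hΓ γ hγ)⟩

lemma symmetrize_mem_adm {T : G ≃g G} {Γ : Set (GWalk G)} (hΓ : ∀ γ ∈ Γ, γ.map T.toHom ∈ Γ)
    {ρ : G.edgeSet → ℝ} (hρ : ρ ∈ Adm Γ) : symmetrize T ρ ∈ Adm Γ :=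
  convex_adm Γ hρ (comp_mapEdgeSet_mem_adm hΓ hρ) (by norm_num) (by norm_num) (by norm_num)

theorem symmetry_rule (T : G ≃g G) (hT : ∀ v, T (T v) = v) (Γ : Set (GWalk G))
    (hinv : (fun γ : GWalk G => (⟨T γ.1, T γ.2.1, γ.2.2.map T.toHom⟩ : GWalk G)) '' Γ = Γ) :
    GMod Γ = sInf ((fun ρ => ENNReal.ofReal (energy G ρ)) ''
      {ρ : G.edgeSet → ℝ | ρ ∈ Adm Γ ∧ ∀ e, ρ (T.mapEdgeSet e) = ρ e}) := by
  have hΓ : ∀ γ ∈ Γ, γ.map T.toHom ∈ Γ := fun γ hγ => hinv ▸ Set.mem_image_of_mem _ hγ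
  refine sInf_image_eq_of_forall_exists_le (fun ρ hρ => hρ.1) fun ρ hρ => ?_
  exact ⟨symmetrize T ρ, ⟨symmetrize_mem_adm hΓ hρ, symmetrize_mapEdgeSet hT ρ⟩,
    ENNReal.ofReal_le_ofReal (energy_symmetrize_le T ρ)⟩
end

section
/- Serial rule: let Γ = Γ(A₁,A₂;H) be the family of all walks in a finite graph H from A₁ to A₂, let C ⊆ V(H) be a cut for Γ (every walk in Γ visits C), and let Γⱼ = Γ(Aⱼ,C;H) for j=1,2. Then 1/Mod(Γ) ≥ 1/Mod(Γ₁) + 1/Mod(Γ₂). -/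
/-!
Cutting a walk of `Γ(A₁, A₂)` at a vertex of `C` and reversing its second half splits it into a
walk of `Γ₁` and a walk of `Γ₂` whose `ρ`-lengths add up. Hence, for densities `ρ₁`, `ρ₂`
admissible for `Γ₁`, `Γ₂` with energies `E₁`, `E₂` and weights `a + b = 1`, the density
`max (a ρ₁) (b ρ₂)` is admissible for `Γ` and has energy at most `a² E₁ + b² E₂`, which is
`E₁ E₂ / (E₁ + E₂)` for the optimal weights. Taking the infimum over `ρ₁`, `ρ₂` gives the claim.
-/

open scoped ENNReal

variable {V : Type*} [DecidableEq V] {G : SimpleGraph V} [Fintype G.edgeSet]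

/-- The family of all walks starting in `A` and ending in `B`. -/
def conn (G : SimpleGraph V) (A B : Set V) : Set (GWalk G) :=
  {γ : GWalk G | γ.1 ∈ A ∧ γ.2.1 ∈ B}

/-- Every walk of `Γ` contains a walk of `Γ₁` and a walk of `Γ₂` on disjoint occurrences of its
edges (stated through `ρ`-lengths). -/
def IsSerial (Γ Γ₁ Γ₂ : Set (GWalk G)) : Prop :=
  ∀ γ ∈ Γ, ∃ γ₁ ∈ Γ₁, ∃ γ₂ ∈ Γ₂,
    ∀ ρ : G.edgeSet → ℝ, (∀ e, 0 ≤ ρ e) → wlen ρ γ₁ + wlen ρ γ₂ ≤ wlen ρ γ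

lemma wlen_nonneg {ρ : G.edgeSet → ℝ} (hρ : ∀ e, 0 ≤ ρ e) (γ : GWalk G) : 0 ≤ wlen ρ γ :=
  Finset.sum_nonneg fun _ _ => mul_nonneg (Nat.cast_nonneg _) (hρ _)

lemma wlen_mono {ρ σ : G.edgeSet → ℝ} (h : ∀ e, ρ e ≤ σ e) (γ : GWalk G) :
    wlen ρ γ ≤ wlen σ γ :=
  Finset.sum_le_sum fun e _ => mul_le_mul_of_nonneg_left (h e) (Nat.cast_nonneg _)

lemma wlen_const_mul (a : ℝ) (ρ : G.edgeSet → ℝ) (γ : GWalk G) :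
    wlen (fun e => a * ρ e) γ = a * wlen ρ γ := by
  simp only [wlen, Finset.mul_sum]
  exact Finset.sum_congr rfl fun _ _ => by ring

lemma le_wlen_of_mul_le {a : ℝ} {ρ σ : G.edgeSet → ℝ} {γ : GWalk G} (ha : 0 ≤ a)
    (hσ : 1 ≤ wlen σ γ) (h : ∀ e, a * σ e ≤ ρ e) : a ≤ wlen ρ γ :=
  calc a ≤ a * wlen σ γ := le_mul_of_one_le_right ha hσ
    _ = wlen (fun e => a * σ e) γ := (wlen_const_mul a σ γ).symm
    _ ≤ wlen ρ γ := wlen_mono h γ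

omit [DecidableEq V] in
lemma energy_nonneg (ρ : G.edgeSet → ℝ) : 0 ≤ energy G ρ :=
  Finset.sum_nonneg fun _ _ => sq_nonneg _

omit [DecidableEq V] in
lemma energy_max_le (a b : ℝ) (ρ₁ ρ₂ : G.edgeSet → ℝ) :
    energy G (fun e => max (a * ρ₁ e) (b * ρ₂ e)) ≤ a ^ 2 * energy G ρ₁ + b ^ 2 * energy G ρ₂ := by
  simp only [energy, Finset.mul_sum, ← Finset.sum_add_distrib]
  refine Finset.sum_le_sum fun e _ => ?_
  rcases max_cases (a * ρ₁ e) (b * ρ₂ e) with ⟨h, -⟩ | ⟨h, -⟩ <;> rw [h] <;>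
    nlinarith [sq_nonneg (a * ρ₁ e), sq_nonneg (b * ρ₂ e)]

lemma GMod_le_of_mem_Adm {Γ : Set (GWalk G)} {ρ : G.edgeSet → ℝ} (h : ρ ∈ Adm Γ) :
    GMod Γ ≤ ENNReal.ofReal (energy G ρ) :=
  sInf_le ⟨ρ, h, rfl⟩

lemma ENNReal.inv_ofReal_add_inv_ofReal {x y : ℝ} (hx : 0 < x) (hy : 0 < y) :
    (ENNReal.ofReal x)⁻¹ + (ENNReal.ofReal y)⁻¹ = (ENNReal.ofReal (x * y / (x + y)))⁻¹ := by
  rw [← ENNReal.ofReal_inv_of_pos hx, ← ENNReal.ofReal_inv_of_pos hy,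
    ← ENNReal.ofReal_add (by positivity) (by positivity),
    ← ENNReal.ofReal_inv_of_pos (by positivity)]
  congr 1
  field_simp
  ring

lemma inv_GMod_eq_iSup (Γ : Set (GWalk G)) :
    (GMod Γ)⁻¹ = ⨆ ρ ∈ Adm Γ, (ENNReal.ofReal (energy G ρ))⁻¹ := by
  rw [GMod, ENNReal.inv_sInf, iSup_image]

namespace IsSerial

variable {Γ Γ₁ Γ₂ : Set (GWalk G)}

lemma symm (h : IsSerial Γ Γ₁ Γ₂) : IsSerial Γ Γ₂ Γ₁ := fun γ hγ => by
  obtain ⟨γ₁, h₁, γ₂, h₂, hle⟩ := h γ hγ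
  exact ⟨γ₂, h₂, γ₁, h₁, fun ρ hρ => add_comm (wlen ρ γ₁) _ ▸ hle ρ hρ⟩

lemma max_mem_Adm (h : IsSerial Γ Γ₁ Γ₂) {ρ₁ ρ₂ : G.edgeSet → ℝ} (hρ₁ : ρ₁ ∈ Adm Γ₁)
    (hρ₂ : ρ₂ ∈ Adm Γ₂) {a b : ℝ} (ha : 0 ≤ a) (hb : 0 ≤ b) (hab : a + b = 1) :
    (fun e => max (a * ρ₁ e) (b * ρ₂ e)) ∈ Adm Γ := by
  have hρ : ∀ e, 0 ≤ max (a * ρ₁ e) (b * ρ₂ e) :=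
    fun e => (mul_nonneg ha (hρ₁.1 e)).trans (le_max_left _ _)
  refine ⟨hρ, fun γ hγ => ?_⟩
  obtain ⟨γ₁, h₁, γ₂, h₂, hle⟩ := h γ hγ
  have l₁ := le_wlen_of_mul_le ha (hρ₁.2 γ₁ h₁) fun e => le_max_left (a * ρ₁ e) (b * ρ₂ e)
  have l₂ := le_wlen_of_mul_le hb (hρ₂.2 γ₂ h₂) fun e => le_max_right (a * ρ₁ e) (b * ρ₂ e)
  linarith [hle _ hρ]

lemma GMod_le (h : IsSerial Γ Γ₁ Γ₂) {ρ₁ ρ₂ : G.edgeSet → ℝ} (hρ₁ : ρ₁ ∈ Adm Γ₁)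
    (hρ₂ : ρ₂ ∈ Adm Γ₂) {a b : ℝ} (ha : 0 ≤ a) (hb : 0 ≤ b) (hab : a + b = 1) :
    GMod Γ ≤ ENNReal.ofReal (a ^ 2 * energy G ρ₁ + b ^ 2 * energy G ρ₂) :=
  (GMod_le_of_mem_Adm (h.max_mem_Adm hρ₁ hρ₂ ha hb hab)).trans
    (ENNReal.ofReal_le_ofReal (energy_max_le a b ρ₁ ρ₂))

lemma Adm_subset_right (h : IsSerial Γ Γ₁ Γ₂) : Adm Γ₂ ⊆ Adm Γ := fun ρ hρ => by
  refine ⟨hρ.1, fun γ hγ => ?_⟩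
  obtain ⟨γ₁, -, γ₂, h₂, hle⟩ := h γ hγ
  linarith [hle ρ hρ.1, hρ.2 γ₂ h₂, wlen_nonneg hρ.1 γ₁]

lemma GMod_le_right (h : IsSerial Γ Γ₁ Γ₂) : GMod Γ ≤ GMod Γ₂ :=
  sInf_le_sInf (Set.image_mono h.Adm_subset_right)

/-- Optimal weights: `a = E₂ / (E₁ + E₂)`, `b = E₁ / (E₁ + E₂)`. -/
lemma inv_energy_add_inv_energy_le (h : IsSerial Γ Γ₁ Γ₂) {ρ₁ ρ₂ : G.edgeSet → ℝ}
    (hρ₁ : ρ₁ ∈ Adm Γ₁) (hρ₂ : ρ₂ ∈ Adm Γ₂) :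
    (ENNReal.ofReal (energy G ρ₁))⁻¹ + (ENNReal.ofReal (energy G ρ₂))⁻¹ ≤ (GMod Γ)⁻¹ := by
  rcases (energy_nonneg ρ₁).eq_or_lt with h₁ | h₁
  · have : GMod Γ ≤ 0 := by
      simpa [← h₁] using h.GMod_le hρ₁ hρ₂ zero_le_one le_rfl (add_zero 1)
    simp [nonpos_iff_eq_zero.mp this]
  rcases (energy_nonneg ρ₂).eq_or_lt with h₂ | h₂
  · have : GMod Γ ≤ 0 := by
      simpa [← h₂] using h.GMod_le hρ₁ hρ₂ le_rfl zero_le_one (zero_add 1)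
    simp [nonpos_iff_eq_zero.mp this]
  set E₁ := energy G ρ₁
  set E₂ := energy G ρ₂
  have hE : 0 < E₁ + E₂ := by positivity
  have hmin : (E₂ / (E₁ + E₂)) ^ 2 * E₁ + (E₁ / (E₁ + E₂)) ^ 2 * E₂ = E₁ * E₂ / (E₁ + E₂) := by
    field_simp
    ring
  rw [ENNReal.inv_ofReal_add_inv_ofReal h₁ h₂, ← hmin]
  exact ENNReal.inv_le_inv.2 (h.GMod_le hρ₁ hρ₂ (by positivity) (by positivity)
    (by rw [← add_div, add_comm, div_self hE.ne']))

theorem inv_GMod_add_inv_GMod_le (h : IsSerial Γ Γ₁ Γ₂) :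
    (GMod Γ₁)⁻¹ + (GMod Γ₂)⁻¹ ≤ (GMod Γ)⁻¹ := by
  rcases (Adm Γ₁).eq_empty_or_nonempty with h₁ | h₁
  · simpa [GMod, h₁] using ENNReal.inv_le_inv.2 h.GMod_le_right
  rcases (Adm Γ₂).eq_empty_or_nonempty with h₂ | h₂
  · simpa [GMod, h₂] using ENNReal.inv_le_inv.2 h.symm.GMod_le_right
  rw [inv_GMod_eq_iSup Γ₁, inv_GMod_eq_iSup Γ₂]
  exact ENNReal.biSup_add_biSup_le h₁ h₂ fun ρ₁ hρ₁ ρ₂ hρ₂ =>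
    h.inv_energy_add_inv_energy_le hρ₁ hρ₂

end IsSerial

lemma isSerial_conn_of_cut {A₁ A₂ C : Set V}
    (hcut : ∀ γ ∈ conn G A₁ A₂, ∃ c ∈ C, c ∈ γ.2.2.support) :
    IsSerial (conn G A₁ A₂) (conn G A₁ C) (conn G A₂ C) := by
  rintro ⟨u, v, w⟩ ⟨hu, hv⟩
  obtain ⟨c, hc, hcw⟩ := hcut ⟨u, v, w⟩ ⟨hu, hv⟩
  refine ⟨⟨u, c, w.takeUntil c hcw⟩, ⟨hu, hc⟩, ⟨v, c, (w.dropUntil c hcw).reverse⟩, ⟨hv, hc⟩,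
    fun ρ _ => le_of_eq ?_⟩
  have hcount : ∀ e : Sym2 V, w.edges.count e =
      (w.takeUntil c hcw).edges.count e + (w.dropUntil c hcw).reverse.edges.count e := by
    intro e
    conv_lhs => rw [← w.take_spec hcw]
    rw [SimpleGraph.Walk.edges_append, List.count_append, SimpleGraph.Walk.edges_reverse,
      List.count_reverse]
  simp only [wlen, hcount, Nat.cast_add, add_mul, Finset.sum_add_distrib]

theorem serial_rule (A₁ A₂ C : Set V)
    (hcut : ∀ γ ∈ conn G A₁ A₂, ∃ c ∈ C, c ∈ γ.2.2.support) :
    (GMod (conn G A₁ A₂))⁻¹ ≥ (GMod (conn G A₁ C))⁻¹ + (GMod (conn G A₂ C))⁻¹ :=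
  (isSerial_conn_of_cut hcut).inv_GMod_add_inv_GMod_le
end

section
/- Capacity equals modulus: for a finite connected graph G=(V,E) and disjoint nonempty sets A,B ⊆ V, Cap(A,B) = Mod(Γ(A,B)), where Cap(A,B) = inf{ Σ_{e={x,y}∈E} |u(x)−u(y)|² : u:V→ℝ, u=0 on A, u=1 on B } and Γ(A,B) is the family of all walks from A to B. -/
open scoped ENNReal

variable {V : Type*} [DecidableEq V] {G : SimpleGraph V} [Fintype G.edgeSet]

/-- The gradient density of a potential `u`. -/
def gradDensity (G : SimpleGraph V) [Fintype G.edgeSet] (u : V → ℝ) : G.edgeSet → ℝ :=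
  fun e => Sym2.lift ⟨fun x y => |u x - u y|, fun x y => abs_sub_comm (u x) (u y)⟩ (e : Sym2 V)


lemma wlen_nil (ρ : G.edgeSet → ℝ) (v : V) : wlen ρ ⟨v, v, SimpleGraph.Walk.nil⟩ = 0 := by
  simp [wlen]

lemma edge_ind (ρ : G.edgeSet → ℝ) {u w : V} (h : G.Adj u w) :
    ∑ e : G.edgeSet, (if (s(u, w) == (e : Sym2 V)) = true then (1:ℝ) else 0) * ρ e
      = ρ ⟨s(u,w), h⟩ := by
  rw [Finset.sum_eq_single (⟨s(u,w), h⟩ : G.edgeSet)]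
  · simp
  · intro b _ hb
    have : ¬ (s(u,w) == (b : Sym2 V)) = true := by
      simp only [beq_iff_eq]
      intro he
      exact hb (Subtype.ext he.symm)
    simp [this]
  · simp

lemma wlen_cons (ρ : G.edgeSet → ℝ) {u w v : V} (h : G.Adj u w) (p : G.Walk w v) :
    wlen ρ ⟨u, v, SimpleGraph.Walk.cons h p⟩ = ρ ⟨s(u,w), h⟩ + wlen ρ ⟨w, v, p⟩ := by
  unfold wlen
  simp only [SimpleGraph.Walk.edges_cons, List.count_cons, Nat.cast_add, add_mul]
  rw [Finset.sum_add_distrib]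
  rw [add_comm]
  congr 1
  · push_cast
    exact edge_ind ρ h

lemma wlen_concat (ρ : G.edgeSet → ℝ) {u w v : V} (p : G.Walk u v) (h : G.Adj v w) :
    wlen ρ ⟨u, w, p.concat h⟩ = wlen ρ ⟨u, v, p⟩ + ρ ⟨s(v,w), h⟩ := by
  unfold wlen
  simp only [SimpleGraph.Walk.edges_concat, List.concat_eq_append, List.count_append,
    List.count_cons, List.count_nil, Nat.cast_add, add_mul]
  rw [Finset.sum_add_distrib]
  congr 1
  push_cast
  simpa using edge_ind ρ h

lemma telescope (u : V → ℝ) {a b : V} (p : G.Walk a b) :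
    |u a - u b| ≤ wlen (gradDensity G u) ⟨a, b, p⟩ := by
  induction p with
  | nil => simp [wlen_nil]
  | cons h p ih =>
    rw [wlen_cons]
    calc |u _ - u _| ≤ |u _ - u _| + |u _ - u _| := abs_sub_le _ _ _
    _ ≤ _ := by
      gcongr
      exact le_of_eq (by simp [gradDensity])

lemma min_lip (a b c : ℝ) : |min a c - min b c| ≤ |a - b| := by
  rcases le_total a c with h1 | h1 <;> rcases le_total b c with h2 | h2 <;>
    simp only [min_eq_left, min_eq_right, h1, h2] <;>
    rw [abs_le] <;> constructor <;>
    [skip; skip; skip; skip; skip; skip; simp; simp] <;>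
    cases' abs_le.mp (le_refl |a - b|) with l r <;> linarith

theorem capacity_eq_modulus (hG : G.Connected) (A B : Set V)
    (hA : A.Nonempty) (hB : B.Nonempty) (hAB : Disjoint A B) :
    sInf ((fun u : V → ℝ => ENNReal.ofReal (energy G (gradDensity G u))) ''
        {u : V → ℝ | (∀ a ∈ A, u a = 0) ∧ (∀ b ∈ B, u b = 1)})
      = GMod (conn G A B) := by
  apply le_antisymm
  · -- Cap ≤ Mod
    refine le_sInf ?_
    rintro m ⟨ρ, ⟨hρ0, hρadm⟩, rfl⟩
    set S : V → Set ℝ := fun x => {r : ℝ | ∃ a ∈ A, ∃ p : G.Walk a x, wlen ρ ⟨a, x, p⟩ = r}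
      with hS
    have hSne : ∀ x, (S x).Nonempty := by
      intro x
      obtain ⟨a, ha⟩ := hA
      exact ⟨_, a, ha, (hG.preconnected a x).some, rfl⟩
    have hSbd : ∀ x, BddBelow (S x) := by
      intro x
      refine ⟨0, ?_⟩
      rintro r ⟨a, ha, p, rfl⟩
      exact wlen_nonneg hρ0 _
    set U : V → ℝ := fun x => sInf (S x) with hUdef
    have hU0 : ∀ x, 0 ≤ U x := fun x =>
      le_csInf (hSne x) (by rintro r ⟨a, ha, p, rfl⟩; exact wlen_nonneg hρ0 _)
    set u : V → ℝ := fun x => min (U x) 1 with hudef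
    have hu0 : ∀ a ∈ A, u a = 0 := by
      intro a ha
      have h1 : U a ≤ 0 := csInf_le (hSbd a) ⟨a, ha, SimpleGraph.Walk.nil, wlen_nil ρ a⟩
      have h2 : U a = 0 := le_antisymm h1 (hU0 a)
      simp [hudef, h2]
    have hu1 : ∀ b ∈ B, u b = 1 := by
      intro b hb
      have h1 : 1 ≤ U b := by
        refine le_csInf (hSne b) ?_
        rintro r ⟨a, ha, p, rfl⟩
        exact hρadm ⟨a, b, p⟩ ⟨ha, hb⟩
      simp [hudef, min_eq_right h1]
    have hlip : ∀ {x y : V} (h : G.Adj x y), U y ≤ U x + ρ ⟨s(x, y), h⟩ := by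
      intro x y h
      have : U y - ρ ⟨s(x, y), h⟩ ≤ U x := by
        refine le_csInf (hSne x) ?_
        rintro r ⟨a, ha, p, rfl⟩
        have : U y ≤ wlen ρ ⟨a, x, p⟩ + ρ ⟨s(x, y), h⟩ :=
          csInf_le (hSbd y) ⟨a, ha, p.concat h, wlen_concat ρ p h⟩
        linarith
      linarith
    have hgrad : ∀ e : G.edgeSet, gradDensity G u e ≤ ρ e := by
      rintro ⟨e, he⟩
      induction e using Sym2.ind with
      | _ x y =>
        have hadj : G.Adj x y := he
        have h1 : U y ≤ U x + ρ ⟨s(x, y), he⟩ := hlip hadj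
        have h2 : U x ≤ U y + ρ ⟨s(x, y), he⟩ := by
          have := hlip hadj.symm
          simpa [Sym2.eq_swap] using this
        have habs : |U x - U y| ≤ ρ ⟨s(x, y), he⟩ := abs_sub_le_iff.mpr ⟨by linarith, by linarith⟩
        have : gradDensity G u ⟨s(x, y), he⟩ = |u x - u y| := by simp [gradDensity]
        rw [this]
        exact le_trans (min_lip (U x) (U y) 1) habs
    have henergy : energy G (gradDensity G u) ≤ energy G ρ := by
      refine Finset.sum_le_sum fun e _ => ?_
      have h0 : 0 ≤ gradDensity G u e := by
        rcases e with ⟨e, he⟩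
        induction e using Sym2.ind with
        | _ x y => simp [gradDensity, abs_nonneg]
      exact pow_le_pow_left₀ h0 (hgrad e) 2
    exact le_trans (sInf_le ⟨u, ⟨hu0, hu1⟩, rfl⟩) (ENNReal.ofReal_le_ofReal henergy)
  · -- Mod ≤ Cap
    refine le_sInf ?_
    rintro m ⟨u, ⟨hu0, hu1⟩, rfl⟩
    refine sInf_le ⟨gradDensity G u, ⟨?_, ?_⟩, rfl⟩
    · rintro ⟨e, he⟩
      induction e using Sym2.ind with
      | _ x y => simp [gradDensity, abs_nonneg]
    · rintro ⟨a, b, p⟩ ⟨ha, hb⟩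
      have : |u a - u b| = 1 := by
        rw [hu0 a ha, hu1 b hb]; norm_num
      calc (1:ℝ) = |u a - u b| := this.symm
      _ ≤ _ := telescope u p
end

section
/- Approximation guarantee of the modulus algorithm: let Γ be a family of walks in a finite graph, 1 ≤ p < ∞, and 0 < ε < 1. Suppose Γ' ⊆ Γ and ρ is the extremal density for Mod_p(Γ') (so E_p(ρ)=Mod_p(Γ')), and suppose every γ ∈ Γ satisfies ℓ_ρ(γ)^p ≥ 1−ε. Then (Mod_p(Γ) − Mod_p(Γ'))/Mod_p(Γ) ≤ ε. -/
open scoped ENNReal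

variable {V : Type*} [DecidableEq V] {G : SimpleGraph V} [Fintype G.edgeSet]

/-- The `p`-energy of a density. -/
noncomputable def energyP (G : SimpleGraph V) [Fintype G.edgeSet] (p : ℝ) (ρ : G.edgeSet → ℝ) : ℝ :=
  ∑ e, ρ e ^ p

/-- The `p`-modulus of a family of walks. -/
noncomputable def GModP (p : ℝ) (Γ : Set (GWalk G)) : ℝ≥0∞ :=
  sInf ((fun ρ => ENNReal.ofReal (energyP G p ρ)) '' Adm Γ)

omit [DecidableEq V] in
lemma energyP_smul (p : ℝ) {c : ℝ} (hc : 0 ≤ c) {ρ : G.edgeSet → ℝ} (hρ : ∀ e, 0 ≤ ρ e) :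
    energyP G p (c • ρ) = c ^ p * energyP G p ρ := by
  simp only [energyP, Finset.mul_sum, Pi.smul_apply, smul_eq_mul]
  exact Finset.sum_congr rfl fun e _ => Real.mul_rpow hc (hρ e)

lemma GModP_le_energyP (p : ℝ) {Γ : Set (GWalk G)} {ρ : G.edgeSet → ℝ} (hρ : ρ ∈ Adm Γ) :
    GModP p Γ ≤ ENNReal.ofReal (energyP G p ρ) :=
  sInf_le ⟨ρ, hρ, rfl⟩

lemma inv_smul_mem_Adm {Γ : Set (GWalk G)} {ρ : G.edgeSet → ℝ} {ℓ : ℝ} (hℓ : 0 < ℓ)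
    (hρ : ∀ e, 0 ≤ ρ e) (hlen : ∀ γ ∈ Γ, ℓ ≤ wlen ρ γ) : ℓ⁻¹ • ρ ∈ Adm Γ := by
  refine ⟨fun e => mul_nonneg (inv_nonneg.2 hℓ.le) (hρ e), fun γ hγ => ?_⟩
  rw [wlen_smul, inv_mul_eq_div, one_le_div hℓ]
  exact hlen γ hγ

lemma ofReal_rpow_mul_GModP_le (p : ℝ) {Γ : Set (GWalk G)} {ρ : G.edgeSet → ℝ} {ℓ : ℝ}
    (hℓ : 0 < ℓ) (hρ : ∀ e, 0 ≤ ρ e) (hlen : ∀ γ ∈ Γ, ℓ ≤ wlen ρ γ) :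
    ENNReal.ofReal (ℓ ^ p) * GModP p Γ ≤ ENNReal.ofReal (energyP G p ρ) := by
  have hℓp : 0 < ℓ ^ p := Real.rpow_pos_of_pos hℓ p
  calc ENNReal.ofReal (ℓ ^ p) * GModP p Γ
      ≤ ENNReal.ofReal (ℓ ^ p) * ENNReal.ofReal (energyP G p (ℓ⁻¹ • ρ)) :=
        mul_le_mul_right (GModP_le_energyP p (inv_smul_mem_Adm hℓ hρ hlen)) _
    _ = ENNReal.ofReal (energyP G p ρ) := by
        rw [← ENNReal.ofReal_mul hℓp.le, energyP_smul p (inv_nonneg.2 hℓ.le) hρ,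
          Real.inv_rpow hℓ.le, mul_inv_cancel_left₀ hℓp.ne']

lemma ENNReal.sub_div_le_of_one_sub_mul_le {a b c : ℝ≥0∞} (h : (1 - c) * a ≤ b) :
    (a - b) / a ≤ c := by
  have hsplit : a ≤ c * a + b :=
    calc a = 1 * a := (one_mul a).symm
      _ ≤ (c + (1 - c)) * a := mul_le_mul_left le_add_tsub a
      _ = c * a + (1 - c) * a := add_mul _ _ _
      _ ≤ c * a + b := add_le_add_right h _
  calc (a - b) / a ≤ c * a / a := ENNReal.div_le_div_right (tsub_le_iff_right.2 hsplit) a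
    _ = c * (a / a) := mul_div_assoc _ _ _
    _ ≤ c := mul_le_of_le_one_right' ENNReal.div_self_le_one

theorem algorithm_approximation_general (p ε : ℝ) (hp : 1 ≤ p) (hε0 : 0 < ε) (hε1 : ε < 1)
    (Γ Γ' : Set (GWalk G)) (ρ : G.edgeSet → ℝ)
    (hρ : ρ ∈ Adm Γ') (hext : ENNReal.ofReal (energyP G p ρ) = GModP p Γ')
    (hshort : ∀ γ ∈ Γ, 1 - ε ≤ wlen ρ γ ^ p) :
    (GModP p Γ - GModP p Γ') / GModP p Γ ≤ ENNReal.ofReal ε := by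
  have hp0 : 0 < p := by linarith
  have h1ε : 0 < 1 - ε := by linarith
  have hlen : ∀ γ ∈ Γ, (1 - ε) ^ p⁻¹ ≤ wlen ρ γ := fun γ hγ =>
    (Real.rpow_inv_le_iff_of_pos h1ε.le (wlen_nonneg hρ.1 γ) hp0).2 (hshort γ hγ)
  have key := ofReal_rpow_mul_GModP_le p (Real.rpow_pos_of_pos h1ε _) hρ.1 hlen
  rw [← Real.rpow_mul h1ε.le, inv_mul_cancel₀ hp0.ne', Real.rpow_one, hext] at key
  apply ENNReal.sub_div_le_of_one_sub_mul_le
  rwa [← ENNReal.ofReal_one, ← ENNReal.ofReal_sub _ hε0.le]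

theorem algorithm_approximation (p ε : ℝ) (hp : 1 ≤ p) (hε0 : 0 < ε) (hε1 : ε < 1)
    (Γ Γ' : Set (GWalk G)) (hsub : Γ' ⊆ Γ) (ρ : G.edgeSet → ℝ)
    (hρ : ρ ∈ Adm Γ') (hext : ENNReal.ofReal (energyP G p ρ) = GModP p Γ')
    (hshort : ∀ γ ∈ Γ, 1 - ε ≤ wlen ρ γ ^ p) :
    (GModP p Γ - GModP p Γ') / GModP p Γ ≤ ENNReal.ofReal ε :=
  algorithm_approximation_general p ε hp hε0 hε1 Γ Γ' ρ hρ hext hshort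
end
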